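/- With the same state-space setup as follows: fix n ≥ 1, k ≥ 1, measurable p₀ : ℝⁿ → [0,∞), q_i : ℝⁿ × ℝⁿ → [0,∞) (0 ≤ i ≤ k), g_i : ℝⁿ → [0,∞) (0 ≤ i ≤ k+1); potentials f₀(z,z') = p₀(z) q₀(z,z') g₀(z) g₁(z'), f_i(z,z') = q_i(z,z') g_{i+1}(z') for 1 ≤ i ≤ k; ρ(z₀,…,z_{k+1}) = ∏_{i=0}^{k} f_i(z_i, z_{i+1}) strictly positive with 0 < ∫ρ < ∞; Π the probability measure with density ρ/∫ρ; reference probability measures η₀,…,η_{k+1} on ℝⁿ absolutely continuous with strictly positive densities e_i; and measurable block upper triangular maps M_i(x,y) = (M_i⁰(x,y), M_i¹(y)) satisfying c₀ := ∫ f₀, Measure.map M₀ (η₀.prod η₁) = measure with density f₀/c₀, and for 1 ≤ i ≤ k, c_i := ∫∫ e_i(x) f_i(M_{i-1}¹(x), y) dx dy ∈ (0,∞) and Measure.map M_i (η_i.prod η_{i+1}) = measure with density (x,y) ↦ e_i(x) f_i(M_{i-1}¹(x), y)/c_i. Define M̄_k(x, y) := (M_{k-1}¹(M_k⁰(x, y)),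 M_k¹(y)). Then Measure.map M̄_k (η_k.prod η_{k+1}) equals the marginal of Π on the pair of coordinates (z_k, z_{k+1}), i.e., the lag-1 smoothing distribution π_{Z_k, Z_{k+1} | y_{0:k+1}}. -/

import Mathlib

/-!
Let `W_0 = 1` and `W_{i+1}(y) = ∫ W_i(x) f_i(x, y) dx`. Integrating out the coordinates one at a
time shows that the `(z_k, z_{k+1})`-marginal of `ρ` is `W_k(u) f_k(u, v) du dv`.

On the transport side, composing the `i`-th map with `M¹_{i-1}` in its first coordinate turns the
density `e_i(x) f_i(M¹_{i-1}(x), y) / c_i` into the density `f_i(u, y) / c_i` with respect to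
`(M¹_{i-1})_* η_i ⊗ dy`, and the second marginal of the result is `(M¹_i)_* η_{i+1}`. By induction,
`(M¹_{i-1})_* η_i` is a multiple of `W_i(u) du`, and at `i = k` the map `M̄_k` pushes
`η_k ⊗ η_{k+1}` to a multiple of `W_k(u) f_k(u, v) du dv`. Both sides of the theorem are
probability measures proportional to the same measure, hence equal: no normalising constant has to
be computed.
-/

open MeasureTheory ProbabilityTheory

/-- The pairwise potentials of the smoothing density of a state-space model:
`f₀(z,z') = p₀(z) q₀(z,z') g₀(z) g₁(z')` and `f_i(z,z') = q_i(z,z') g_{i+1}(z')` for `i ≥ 1`. -/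
noncomputable def potential {n : ℕ} (p₀ : (Fin n → ℝ) → ℝ)
    (q : ℕ → (Fin n → ℝ) → (Fin n → ℝ) → ℝ) (g : ℕ → (Fin n → ℝ) → ℝ) :
    ℕ → (Fin n → ℝ) → (Fin n → ℝ) → ℝ
  | 0 => fun z z' => p₀ z * q 0 z z' * g 0 z * g 1 z'
  | (i + 1) => fun z z' => q (i + 1) z z' * g (i + 2) z'

/-- The unnormalized smoothing density `ρ(z₀,…,z_{k+1}) = ∏_{i=0}^{k} f_i(z_i, z_{i+1})`. -/
noncomputable def smoothingDensity {n k : ℕ} (p₀ : (Fin n → ℝ) → ℝ)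
    (q : ℕ → (Fin n → ℝ) → (Fin n → ℝ) → ℝ) (g : ℕ → (Fin n → ℝ) → ℝ)
    (z : Fin (k + 2) → Fin n → ℝ) : ℝ :=
  ∏ i : Fin (k + 1), potential p₀ q g i (z i.castSucc) (z i.succ)

open scoped ENNReal

namespace MeasureTheory.Measure

variable {α β γ δ : Type*} [MeasurableSpace α] [MeasurableSpace β] [MeasurableSpace γ]
  [MeasurableSpace δ]

theorem map_withDensity_comp (μ : Measure α) {f : α → β} (hf : Measurable f) {h : β → ℝ≥0∞}
    (hh : Measurable h) : map f (μ.withDensity (h ∘ f)) = (map f μ).withDensity h := by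
  ext s hs
  rw [map_apply hf hs, withDensity_apply _ (hf hs), withDensity_apply _ hs,
    setLIntegral_map hs hh hf, Function.comp_def]

theorem map_snd_withDensity_prod (μ : Measure α) (ν : Measure β) [SFinite μ] [SFinite ν]
    {h : α × β → ℝ≥0∞} (hh : Measurable h) :
    map Prod.snd ((μ.prod ν).withDensity h) = ν.withDensity fun y => ∫⁻ x, h (x, y) ∂μ := by
  ext s hs
  rw [map_apply measurable_snd hs, withDensity_apply _ (measurable_snd hs),
    withDensity_apply _ hs, ← Set.univ_prod, ← prod_restrict, restrict_univ,
    lintegral_prod_symm _ hh.aemeasurable]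

theorem map_prodMap_withDensity (μ : Measure α) (ν : Measure γ) [SFinite μ] [SFinite ν]
    {e : α → ℝ≥0∞} (he : Measurable e) {T : α → β} (hT : Measurable T) {h : β × γ → ℝ≥0∞}
    (hh : Measurable h) :
    map (Prod.map T id) ((μ.prod ν).withDensity fun p => e p.1 * h (T p.1, p.2)) =
      ((map T (μ.withDensity e)).prod ν).withDensity h := by
  have hTid : Measurable (Prod.map T (id : γ → γ)) := hT.prodMap measurable_id
  rw [show (fun p : α × γ => e p.1 * h (T p.1, p.2)) = (e ∘ Prod.fst) * (h ∘ Prod.map T id)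
      from rfl, withDensity_mul _ (he.comp measurable_fst) (hh.comp hTid), Function.comp_def,
    ← prod_withDensity_left he, map_withDensity_comp _ hTid hh,
    ← map_prod_map _ _ hT measurable_id, map_id]

theorem eq_of_eq_smul_of_eq_smul {μ ν κ : Measure α} [IsProbabilityMeasure μ]
    [IsProbabilityMeasure ν] {a b : ℝ≥0∞} (hμ : μ = a • κ) (hν : ν = b • κ) : μ = ν := by
  have ha : a * κ Set.univ = 1 := by simpa [hμ] using measure_univ (μ := μ)
  have hb : b * κ Set.univ = 1 := by simpa [hν] using measure_univ (μ := ν)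
  have hκ0 : κ Set.univ ≠ 0 := right_ne_zero_of_mul_eq_one ha
  have hκtop : κ Set.univ ≠ ∞ := fun h => by
    simp [h, ENNReal.mul_top (left_ne_zero_of_mul_eq_one ha)] at ha
  rw [hμ, hν, (ENNReal.mul_left_inj hκ0 hκtop).mp (ha.trans hb.symm)]

theorem prod_withDensity_smul_withDensity (μ : Measure α) (ν : Measure β) [SFinite ν]
    (t c : ℝ≥0∞) {W : α → ℝ≥0∞} (hW : Measurable W) {G : α → β → ℝ≥0∞}
    (hG : Measurable (Function.uncurry G)) :
    ((t • μ.withDensity W).prod ν).withDensity (fun p => G p.1 p.2 * c) =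
      (t * c) • (μ.prod ν).withDensity fun p => W p.1 * G p.1 p.2 := by
  have hdens : (fun p : α × β => W p.1) * (fun p => G p.1 p.2 * c) =
      c • fun p => W p.1 * G p.1 p.2 := by
    ext p
    simp only [Pi.mul_apply, Pi.smul_apply, smul_eq_mul]
    ring
  have hWfst : Measurable fun p : α × β => W p.1 := hW.comp measurable_fst
  have hGc : Measurable fun p : α × β => G p.1 p.2 * c := hG.mul measurable_const
  have hWG : Measurable fun p : α × β => W p.1 * G p.1 p.2 := hWfst.mul hG
  rw [prod_smul_left, prod_withDensity_left hW, withDensity_smul_measure,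
    ← withDensity_mul _ hWfst hGc, hdens, withDensity_smul _ hWG, smul_smul]

theorem map_eq_map_snd_map_prodMk (η : Measure α) [IsProbabilityMeasure η] (ξ : Measure β)
    [SFinite ξ] {A : α × β → γ} (hA : Measurable A) {T : β → δ} (hT : Measurable T) :
    map T ξ = map Prod.snd (map (fun p => (A p, T p.2)) (η.prod ξ)) := by
  have hAT : Measurable fun p : α × β => (A p, T p.2) := hA.prodMk (hT.comp measurable_snd)
  rw [map_map measurable_snd hAT,
    show Prod.snd ∘ (fun p => (A p, T p.2)) = T ∘ Prod.snd from rfl,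
    ← map_map hT measurable_snd, map_snd_prod, measure_univ, one_smul]

theorem isProbabilityMeasure_withDensity_ofReal_div_integral {μ : Measure α} {f : α → ℝ}
    (hf : Integrable f μ) (hf0 : 0 ≤ᵐ[μ] f) (hI : ∫ x, f x ∂μ ≠ 0) :
    IsProbabilityMeasure (μ.withDensity fun x => ENNReal.ofReal (f x / ∫ x, f x ∂μ)) := by
  constructor
  rw [withDensity_apply _ MeasurableSet.univ, Measure.restrict_univ,
    ← ofReal_integral_eq_lintegral_ofReal (hf.div_const _)
      (hf0.mono fun x hx => div_nonneg hx (integral_nonneg_of_ae hf0)),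
    integral_div, div_self hI, ENNReal.ofReal_one]

end MeasureTheory.Measure

section Chain

variable {α : Type*} {G : ℕ → α → α → ℝ≥0∞} {m : ℕ}

noncomputable def chainProd (G : ℕ → α → α → ℝ≥0∞) {m : ℕ} (z : Fin (m + 1) → α) : ℝ≥0∞ :=
  ∏ i : Fin m, G i (z i.castSucc) (z i.succ)

theorem chainProd_snoc (w : Fin (m + 1) → α) (v : α) :
    chainProd G (Fin.snoc w v : Fin (m + 2) → α) = chainProd G w * G m (w (Fin.last m)) v := by
  rw [chainProd, chainProd, Fin.prod_univ_castSucc]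
  simp only [Fin.succ_castSucc, Fin.snoc_castSucc, Fin.succ_last, Fin.snoc_last, Fin.val_castSucc,
    Fin.val_last]

variable [MeasurableSpace α]

theorem measurable_chainProd (hG : ∀ i < m, Measurable (Function.uncurry (G i))) :
    Measurable (chainProd G (m := m)) :=
  Finset.measurable_prod _ fun i _ =>
    (hG i i.isLt).comp (f := fun z : Fin (m + 1) → α => (z i.castSucc, z i.succ)) (by fun_prop)

variable (μ : Measure α)

noncomputable def forwardWeight (G : ℕ → α → α → ℝ≥0∞) : ℕ → α → ℝ≥0∞
  | 0 => 1
  | i + 1 => fun y => ∫⁻ x, forwardWeight G i x * G i x y ∂μ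

theorem measurable_forwardWeight [SFinite μ] (hG : ∀ i < m, Measurable (Function.uncurry (G i))) :
    Measurable (forwardWeight μ G m) := by
  induction m with
  | zero => exact measurable_const
  | succ m ih =>
    exact Measurable.lintegral_prod_left'
      (((ih fun i hi => hG i (by omega)).comp measurable_fst).mul (hG m m.lt_succ_self))

theorem lintegral_pi_fin_snoc [SigmaFinite μ] {f : (Fin (m + 2) → α) → ℝ≥0∞}
    (hf : Measurable f) :
    ∫⁻ z, f z ∂(Measure.pi fun _ => μ) =
      ∫⁻ w, ∫⁻ v, f (Fin.snoc w v) ∂μ ∂(Measure.pi fun _ => μ) := by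
  rw [← ((measurePreserving_piFinSuccAbove (fun _ => μ) (Fin.last (m + 1))).symm).lintegral_comp
    hf, lintegral_prod_symm' (fun p => f ((MeasurableEquiv.piFinSuccAbove _ _).symm p))
      (hf.comp (MeasurableEquiv.measurable _))]
  simp [MeasurableEquiv.piFinSuccAbove_symm_apply, Fin.snocEquiv]

theorem lintegral_pi_chainProd_snoc [SigmaFinite μ]
    (hG : ∀ i ≤ m, Measurable (Function.uncurry (G i))) {φ : α × α → ℝ≥0∞} (hφ : Measurable φ) :
    ∫⁻ z : Fin (m + 2) → α, chainProd G z * φ (z (Fin.last m).castSucc, z (Fin.last (m + 1)))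
        ∂(Measure.pi fun _ => μ) =
      ∫⁻ w, chainProd G w * ∫⁻ v, G m (w (Fin.last m)) v * φ (w (Fin.last m), v) ∂μ
        ∂(Measure.pi fun _ => μ) := by
  have hchain := measurable_chainProd (G := G) (m := m + 1) fun i hi => hG i (by omega)
  rw [lintegral_pi_fin_snoc μ
    (f := fun z => chainProd G z * φ (z (Fin.last m).castSucc, z (Fin.last (m + 1))))
    (hchain.mul (by fun_prop))]
  refine lintegral_congr fun w => ?_
  have hGm : Measurable (G m (w (Fin.last m))) := (hG m le_rfl).of_uncurry_left
  simp only [chainProd_snoc, Fin.snoc_castSucc, Fin.snoc_last, mul_assoc]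
  exact lintegral_const_mul _ (hGm.mul (by fun_prop))

theorem lintegral_pi_chainProd_mul_last [SigmaFinite μ]
    (hG : ∀ i < m, Measurable (Function.uncurry (G i))) {φ : α → ℝ≥0∞} (hφ : Measurable φ) :
    ∫⁻ z : Fin (m + 1) → α, chainProd G z * φ (z (Fin.last m)) ∂(Measure.pi fun _ => μ) =
      ∫⁻ y, forwardWeight μ G m y * φ y ∂μ := by
  induction m generalizing φ with
  | zero =>
    simp only [chainProd, Finset.univ_eq_empty, Finset.prod_empty, one_mul, forwardWeight,
      Pi.one_apply]
    exact (measurePreserving_piUnique fun _ : Fin 1 => μ).lintegral_comp hφ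
  | succ m ih =>
    have hGm : Measurable (Function.uncurry (G m)) := hG m m.lt_succ_self
    have hψ : Measurable fun u => ∫⁻ v, G m u v * φ v ∂μ :=
      Measurable.lintegral_prod_right' (hGm.mul (hφ.comp measurable_snd))
    refine (lintegral_pi_chainProd_snoc μ (fun i hi => hG i (by omega))
      (φ := fun p => φ p.2) (hφ.comp measurable_snd)).trans ?_
    rw [ih (fun i hi => hG i (by omega)) hψ]
    have hW := measurable_forwardWeight μ fun i (hi : i < m) => hG i (by omega)
    calc ∫⁻ u, forwardWeight μ G m u * ∫⁻ v, G m u v * φ v ∂μ ∂μ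
        = ∫⁻ u, ∫⁻ v, forwardWeight μ G m u * (G m u v * φ v) ∂μ ∂μ :=
          lintegral_congr fun u => (lintegral_const_mul _ (hGm.of_uncurry_left.mul hφ)).symm
      _ = ∫⁻ v, ∫⁻ u, forwardWeight μ G m u * (G m u v * φ v) ∂μ ∂μ :=
          lintegral_lintegral_swap ((hW.comp measurable_fst).mul
            (hGm.mul (hφ.comp measurable_snd))).aemeasurable
      _ = ∫⁻ v, forwardWeight μ G (m + 1) v * φ v ∂μ := by
          refine lintegral_congr fun v => ?_
          rw [forwardWeight, ← lintegral_mul_const (f := fun u => forwardWeight μ G m u * G m u v) _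
            (hW.mul hGm.of_uncurry_right)]
          simp only [mul_assoc]

theorem map_pi_withDensity_chainProd [SigmaFinite μ]
    (hG : ∀ i ≤ m, Measurable (Function.uncurry (G i))) :
    Measure.map (fun z : Fin (m + 2) → α => (z (Fin.last m).castSucc, z (Fin.last (m + 1))))
        ((Measure.pi fun _ => μ).withDensity (chainProd G)) =
      (μ.prod μ).withDensity fun p => forwardWeight μ G m p.1 * G m p.1 p.2 := by
  have hproj : Measurable fun z : Fin (m + 2) → α =>
      (z (Fin.last m).castSucc, z (Fin.last (m + 1))) := by
    fun_prop
  have hGm : Measurable (Function.uncurry (G m)) := hG m le_rfl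
  have hW := measurable_forwardWeight μ fun i (hi : i < m) => hG i hi.le
  refine Measure.ext_of_lintegral _ fun φ hφ => ?_
  have hψ : Measurable fun u => ∫⁻ v, G m u v * φ (u, v) ∂μ :=
    Measurable.lintegral_prod_right' (hGm.mul hφ)
  have hdens : Measurable fun p : α × α => forwardWeight μ G m p.1 * G m p.1 p.2 :=
    (hW.comp measurable_fst).mul hGm
  rw [lintegral_map hφ hproj, lintegral_withDensity_eq_lintegral_mul _ hdens hφ,
    lintegral_prod _ (hdens.mul hφ).aemeasurable]
  refine (lintegral_withDensity_eq_lintegral_mul _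
    (measurable_chainProd fun i hi => hG i (by omega)) (hφ.comp hproj)).trans ?_
  refine (lintegral_pi_chainProd_snoc μ hG hφ).trans ?_
  rw [lintegral_pi_chainProd_mul_last μ (fun i hi => hG i hi.le) hψ]
  refine lintegral_congr fun u => ?_
  simp only [Pi.mul_apply, mul_assoc]
  exact (lintegral_const_mul _ (hGm.of_uncurry_left.mul (hφ.comp measurable_prodMk_left))).symm

end Chain

section TransportRecursion

open Measure

variable {α : Type*} [MeasurableSpace α] {μ : Measure α} [SFinite μ]

theorem map_comp_transport_eq_prod_withDensity {ξ ξ' : Measure α} [SFinite ξ']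
    {e : α → ℝ≥0∞} (he : Measurable e) (hξ : ξ = μ.withDensity e) {S : α × α → α}
    {R T : α → α} (hS : Measurable S) (hR : Measurable R) (hT : Measurable T)
    {h : α × α → ℝ≥0∞} (hh : Measurable h)
    (hmap : map (fun p => (S p, R p.2)) (ξ.prod ξ') =
      (μ.prod μ).withDensity fun p => e p.1 * h (T p.1, p.2)) :
    map (fun p => (T (S p), R p.2)) (ξ.prod ξ') = ((map T ξ).prod μ).withDensity h := by
  subst hξ
  have hSR : Measurable fun p : α × α => (S p, R p.2) := hS.prodMk (hR.comp measurable_snd)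
  rw [← map_prodMap_withDensity μ μ he hT hh, ← hmap, map_map (hT.prodMap measurable_id) hSR]
  rfl

variable {η : ℕ → Measure α} {e : ℕ → α → ℝ≥0∞} {S : ℕ → α × α → α} {T : ℕ → α → α}
  {G : ℕ → α → α → ℝ≥0∞} {C : ℕ → ℝ≥0∞} {k : ℕ}

theorem exists_map_eq_smul_withDensity_forwardWeight
    (hη : ∀ i, 1 ≤ i → i ≤ k → η i = μ.withDensity (e i))
    (hprob : ∀ i ≤ k + 1, IsProbabilityMeasure (η i)) (he : ∀ i, 1 ≤ i → i ≤ k → Measurable (e i))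
    (hS : ∀ i ≤ k, Measurable (S i)) (hT : ∀ i ≤ k, Measurable (T i))
    (hG : ∀ i ≤ k, Measurable (Function.uncurry (G i)))
    (hmap0 : map (fun p => (S 0 p, T 0 p.2)) ((η 0).prod (η 1)) =
      (μ.prod μ).withDensity fun p => G 0 p.1 p.2 * C 0)
    (hmap : ∀ i, 1 ≤ i → i ≤ k → map (fun p => (S i p, T i p.2)) ((η i).prod (η (i + 1))) =
      (μ.prod μ).withDensity fun p => e i p.1 * (G i (T (i - 1) p.1) p.2 * C i)) :
    ∀ j ≤ k, ∃ t : ℝ≥0∞, map (T j) (η (j + 1)) = t • μ.withDensity (forwardWeight μ G (j + 1)) := by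
  intro j hj
  have := hprob j (by omega)
  have := hprob (j + 1) (by omega)
  induction j with
  | zero =>
    have hG0 : Measurable fun p : α × α => G 0 p.1 p.2 * C 0 := (hG 0 hj).mul measurable_const
    refine ⟨C 0, ?_⟩
    rw [map_eq_map_snd_map_prodMk (η 0) (η 1) (hS 0 hj) (hT 0 hj), hmap0,
      map_snd_withDensity_prod _ _ hG0, ← withDensity_smul _
        (measurable_forwardWeight μ fun i hi => hG i (by omega))]
    congr 1 with y
    simp only [forwardWeight, Pi.one_apply, one_mul, Pi.smul_apply, smul_eq_mul]
    rw [lintegral_mul_const _ (hG 0 hj).of_uncurry_right, mul_comm]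
  | succ j ih =>
    obtain ⟨t, ht⟩ := ih (by omega) (hprob j (by omega)) (by assumption)
    have hstep := hmap (j + 1) (by omega) hj
    simp only [Nat.add_sub_cancel] at hstep
    have hGj : Measurable (Function.uncurry (G (j + 1))) := hG (j + 1) hj
    have hW : Measurable (forwardWeight μ G (j + 1)) :=
      measurable_forwardWeight μ fun i hi => hG i (by omega)
    have hWG : Measurable fun p : α × α => forwardWeight μ G (j + 1) p.1 * G (j + 1) p.1 p.2 :=
      (hW.comp measurable_fst).mul hGj
    refine ⟨t * C (j + 1), ?_⟩
    rw [map_eq_map_snd_map_prodMk (η (j + 1)) (η (j + 2)) (A := fun p => T j (S (j + 1) p))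
        ((hT j (by omega)).comp (hS (j + 1) hj)) (hT (j + 1) hj),
      map_comp_transport_eq_prod_withDensity (he (j + 1) (by omega) hj) (hη (j + 1) (by omega) hj)
        (hS (j + 1) hj) (hT (j + 1) hj) (hT j (by omega))
        (h := fun p => G (j + 1) p.1 p.2 * C (j + 1)) (hGj.mul measurable_const) hstep,
      ht, prod_withDensity_smul_withDensity _ _ _ _ hW hGj, Measure.map_smul,
      map_snd_withDensity_prod _ _ hWG]
    rfl

theorem exists_map_lagOne_eq_smul_withDensity (hk : 1 ≤ k)
    (hη : ∀ i, 1 ≤ i → i ≤ k → η i = μ.withDensity (e i))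
    (hprob : ∀ i ≤ k + 1, IsProbabilityMeasure (η i)) (he : ∀ i, 1 ≤ i → i ≤ k → Measurable (e i))
    (hS : ∀ i ≤ k, Measurable (S i)) (hT : ∀ i ≤ k, Measurable (T i))
    (hG : ∀ i ≤ k, Measurable (Function.uncurry (G i)))
    (hmap0 : map (fun p => (S 0 p, T 0 p.2)) ((η 0).prod (η 1)) =
      (μ.prod μ).withDensity fun p => G 0 p.1 p.2 * C 0)
    (hmap : ∀ i, 1 ≤ i → i ≤ k → map (fun p => (S i p, T i p.2)) ((η i).prod (η (i + 1))) =
      (μ.prod μ).withDensity fun p => e i p.1 * (G i (T (i - 1) p.1) p.2 * C i)) :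
    ∃ a : ℝ≥0∞, map (fun p => (T (k - 1) (S k p), T k p.2)) ((η k).prod (η (k + 1))) =
      a • (μ.prod μ).withDensity fun p => forwardWeight μ G k p.1 * G k p.1 p.2 := by
  have := hprob (k + 1) le_rfl
  obtain ⟨t, ht⟩ := exists_map_eq_smul_withDensity_forwardWeight (k := k - 1)
    (fun i h1 hi => hη i h1 (by omega)) (fun i hi => hprob i (by omega))
    (fun i h1 hi => he i h1 (by omega)) (fun i hi => hS i (by omega))
    (fun i hi => hT i (by omega)) (fun i hi => hG i (by omega)) hmap0
    (fun i h1 hi => hmap i h1 (by omega)) (k - 1) le_rfl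
  rw [Nat.sub_add_cancel hk] at ht
  have hGk : Measurable (Function.uncurry (G k)) := hG k le_rfl
  refine ⟨t * C k, ?_⟩
  rw [map_comp_transport_eq_prod_withDensity (he k hk le_rfl) (hη k hk le_rfl) (hS k le_rfl)
      (hT k le_rfl) (hT (k - 1) (by omega)) (h := fun p => G k p.1 p.2 * C k)
      (hGk.mul measurable_const) (hmap k hk le_rfl),
    ht, prod_withDensity_smul_withDensity _ _ _ _
      (measurable_forwardWeight μ fun i hi => hG i (by omega)) hGk]

end TransportRecursion

section StateSpaceModel

variable {n k : ℕ} {p₀ : (Fin n → ℝ) → ℝ} {q : ℕ → (Fin n → ℝ) → (Fin n → ℝ) → ℝ}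
  {g : ℕ → (Fin n → ℝ) → ℝ}

theorem potential_nonneg (hp₀ : ∀ z, 0 ≤ p₀ z) (hq : ∀ i ≤ k, ∀ z z', 0 ≤ q i z z')
    (hg : ∀ i ≤ k + 1, ∀ z, 0 ≤ g i z) {i : ℕ} (hi : i ≤ k) (z z' : Fin n → ℝ) :
    0 ≤ potential p₀ q g i z z' := by
  cases i with
  | zero =>
    exact mul_nonneg (mul_nonneg (mul_nonneg (hp₀ z) (hq 0 hi z z')) (hg 0 (by omega) z))
      (hg 1 (by omega) z')
  | succ i => exact mul_nonneg (hq (i + 1) hi z z') (hg (i + 2) (by omega) z')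

theorem measurable_potential (hp₀ : Measurable p₀)
    (hq : ∀ i ≤ k, Measurable (Function.uncurry (q i))) (hg : ∀ i ≤ k + 1, Measurable (g i))
    {i : ℕ} (hi : i ≤ k) : Measurable (Function.uncurry (potential p₀ q g i)) := by
  cases i with
  | zero =>
    exact (((hp₀.comp measurable_fst).mul (hq 0 hi)).mul
      ((hg 0 (by omega)).comp measurable_fst)).mul ((hg 1 (by omega)).comp measurable_snd)
  | succ i => exact (hq (i + 1) hi).mul ((hg (i + 2) (by omega)).comp measurable_snd)

theorem smoothingDensity_nonneg (hp₀ : ∀ z, 0 ≤ p₀ z) (hq : ∀ i ≤ k, ∀ z z', 0 ≤ q i z z')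
    (hg : ∀ i ≤ k + 1, ∀ z, 0 ≤ g i z) (z : Fin (k + 2) → Fin n → ℝ) :
    0 ≤ smoothingDensity p₀ q g z :=
  Finset.prod_nonneg fun i _ => potential_nonneg hp₀ hq hg (by omega) _ _

theorem ofReal_smoothingDensity (hp₀ : ∀ z, 0 ≤ p₀ z) (hq : ∀ i ≤ k, ∀ z z', 0 ≤ q i z z')
    (hg : ∀ i ≤ k + 1, ∀ z, 0 ≤ g i z) (z : Fin (k + 2) → Fin n → ℝ) :
    ENNReal.ofReal (smoothingDensity p₀ q g z) =
      chainProd (fun i x y => ENNReal.ofReal (potential p₀ q g i x y)) z :=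
  ENNReal.ofReal_prod_of_nonneg fun i _ => potential_nonneg hp₀ hq hg (by omega) _ _

noncomputable def smoothingPosterior (p₀ : (Fin n → ℝ) → ℝ)
    (q : ℕ → (Fin n → ℝ) → (Fin n → ℝ) → ℝ) (g : ℕ → (Fin n → ℝ) → ℝ) :
    Measure (Fin (k + 2) → Fin n → ℝ) :=
  volume.withDensity fun z => ENNReal.ofReal (smoothingDensity p₀ q g z /
    ∫ z, smoothingDensity (k := k) p₀ q g z)

theorem isProbabilityMeasure_smoothingPosterior (hp₀ : ∀ z, 0 ≤ p₀ z)
    (hq : ∀ i ≤ k, ∀ z z', 0 ≤ q i z z') (hg : ∀ i ≤ k + 1, ∀ z, 0 ≤ g i z)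
    (hρint : Integrable (smoothingDensity (k := k) p₀ q g))
    (hρmass : 0 < ∫ z, smoothingDensity (k := k) p₀ q g z) :
    IsProbabilityMeasure (smoothingPosterior (k := k) p₀ q g) :=
  Measure.isProbabilityMeasure_withDensity_ofReal_div_integral hρint
    (ae_of_all _ (smoothingDensity_nonneg hp₀ hq hg)) hρmass.ne'

theorem map_smoothingPosterior_eq_smul (hp₀ : Measurable p₀)
    (hq : ∀ i ≤ k, Measurable (Function.uncurry (q i))) (hg : ∀ i ≤ k + 1, Measurable (g i))
    (hp₀pos : ∀ z, 0 ≤ p₀ z) (hqpos : ∀ i ≤ k, ∀ z z', 0 ≤ q i z z')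
    (hgpos : ∀ i ≤ k + 1, ∀ z, 0 ≤ g i z) :
    Measure.map (fun z : Fin (k + 2) → Fin n → ℝ => (z (Fin.last k).castSucc, z (Fin.last (k + 1))))
        (smoothingPosterior p₀ q g) =
      ENNReal.ofReal (∫ z, smoothingDensity (k := k) p₀ q g z)⁻¹ •
        (volume.prod volume).withDensity fun p =>
          forwardWeight volume (fun i x y => ENNReal.ofReal (potential p₀ q g i x y)) k p.1 *
            ENNReal.ofReal (potential p₀ q g k p.1 p.2) := by
  have hG : ∀ i ≤ k, Measurable fun p : (Fin n → ℝ) × (Fin n → ℝ) =>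
      ENNReal.ofReal (potential p₀ q g i p.1 p.2) := fun i hi =>
    (measurable_potential hp₀ hq hg hi).ennreal_ofReal
  rw [← map_pi_withDensity_chainProd volume hG, ← Measure.map_smul, smoothingPosterior,
    ← withDensity_smul _ (measurable_chainProd fun i hi => hG i (by omega))]
  congr 2
  funext z
  rw [div_eq_mul_inv, ENNReal.ofReal_mul (smoothingDensity_nonneg hp₀pos hqpos hgpos z),
    ofReal_smoothingDensity hp₀pos hqpos hgpos, Pi.smul_apply, smul_eq_mul, mul_comm]

end StateSpaceModel

/-- **Lag-1 smoothing via decomposable transports.**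
Under the transport recursion of the decomposition theorem for state-space models, the map
`M̄_k(x,y) = (M_{k-1}¹(M_k⁰(x,y)), M_k¹(y))` pushes `η_k ⊗ η_{k+1}` forward to the lag-1
smoothing distribution, i.e. the `(z_k, z_{k+1})`-marginal of the smoothing posterior `Π`. -/
theorem lag_one_smoothing_of_recursion
    (n k : ℕ) (hk : 1 ≤ k)
    (p₀ : (Fin n → ℝ) → ℝ)
    (q : ℕ → (Fin n → ℝ) → (Fin n → ℝ) → ℝ)
    (g : ℕ → (Fin n → ℝ) → ℝ)
    (hp₀ : Measurable p₀) (hp₀pos : ∀ z, 0 ≤ p₀ z)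
    (hq : ∀ i ≤ k, Measurable (Function.uncurry (q i)))
    (hqpos : ∀ i ≤ k, ∀ z z', 0 ≤ q i z z')
    (hg : ∀ i ≤ k + 1, Measurable (g i))
    (hgpos : ∀ i ≤ k + 1, ∀ z, 0 ≤ g i z)
    (hρint : Integrable (smoothingDensity (k := k) p₀ q g))
    (hρmass : 0 < ∫ z, smoothingDensity (k := k) p₀ q g z)
    (η : ℕ → Measure (Fin n → ℝ)) (e : ℕ → (Fin n → ℝ) → ℝ)
    (hηprob : ∀ i ≤ k + 1, IsProbabilityMeasure (η i))
    (hemeas : ∀ i ≤ k + 1, Measurable (e i))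
    (hηd : ∀ i ≤ k + 1,
      η i = (volume : Measure (Fin n → ℝ)).withDensity (fun x => ENNReal.ofReal (e i x)))
    (hepos : ∀ i ≤ k + 1, ∀ x, 0 < e i x)
    (M0 : ℕ → (Fin n → ℝ) × (Fin n → ℝ) → (Fin n → ℝ))
    (M1 : ℕ → (Fin n → ℝ) → (Fin n → ℝ))
    (hM0 : ∀ i ≤ k, Measurable (M0 i)) (hM1 : ∀ i ≤ k, Measurable (M1 i))
    (c : ℕ → ℝ)
    (hmap0 : Measure.map (fun p : (Fin n → ℝ) × (Fin n → ℝ) => (M0 0 p, M1 0 p.2))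
        ((η 0).prod (η 1)) =
      (volume : Measure ((Fin n → ℝ) × (Fin n → ℝ))).withDensity
        (fun p => ENNReal.ofReal (potential p₀ q g 0 p.1 p.2 / c 0)))
    (hmapi : ∀ i, 1 ≤ i → i ≤ k →
      Measure.map (fun p : (Fin n → ℝ) × (Fin n → ℝ) => (M0 i p, M1 i p.2))
          ((η i).prod (η (i + 1))) =
        (volume : Measure ((Fin n → ℝ) × (Fin n → ℝ))).withDensity
          (fun p => ENNReal.ofReal
            (e i p.1 * potential p₀ q g i (M1 (i - 1) p.1) p.2 / c i))) :
    Measure.map (fun p : (Fin n → ℝ) × (Fin n → ℝ) => (M1 (k - 1) (M0 k p), M1 k p.2))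
        ((η k).prod (η (k + 1))) =
      Measure.map (fun z : Fin (k + 2) → Fin n → ℝ => (z ⟨k, by omega⟩, z (Fin.last (k + 1))))
        ((volume : Measure (Fin (k + 2) → Fin n → ℝ)).withDensity
          (fun z => ENNReal.ofReal (smoothingDensity (k := k) p₀ q g z /
            ∫ z, smoothingDensity (k := k) p₀ q g z))) := by
  have hf : ∀ i ≤ k, ∀ x y, 0 ≤ potential p₀ q g i x y := fun i hi =>
    potential_nonneg hp₀pos hqpos hgpos hi
  obtain ⟨a, ha⟩ := exists_map_lagOne_eq_smul_withDensity (μ := volume)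
    (G := fun i x y => ENNReal.ofReal (potential p₀ q g i x y))
    (e := fun i x => ENNReal.ofReal (e i x)) (C := fun i => ENNReal.ofReal (c i)⁻¹) hk
    (fun i _ hi => hηd i (by omega)) hηprob (fun i _ hi => (hemeas i (by omega)).ennreal_ofReal)
    hM0 hM1 (fun i hi => (measurable_potential hp₀ hq hg hi).ennreal_ofReal)
    (by
      rw [hmap0]
      congr 1 with p
      rw [div_eq_mul_inv, ENNReal.ofReal_mul (hf 0 (by omega) _ _)])
    (fun i h1 hi => by
      rw [hmapi i h1 hi]
      congr 1 with p
      rw [div_eq_mul_inv, mul_assoc, ENNReal.ofReal_mul (hepos i (by omega) _).le,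
        ENNReal.ofReal_mul (hf i hi _ _)])
  have := hηprob k (by omega)
  have := hηprob (k + 1) le_rfl
  have := Measure.isProbabilityMeasure_map (μ := (η k).prod (η (k + 1)))
    (f := fun p => (M1 (k - 1) (M0 k p), M1 k p.2))
    (((hM1 (k - 1) (by omega)).comp (hM0 k le_rfl)).prodMk
      ((hM1 k le_rfl).comp measurable_snd)).aemeasurable
  have := isProbabilityMeasure_smoothingPosterior hp₀pos hqpos hgpos hρint hρmass
  have := Measure.isProbabilityMeasure_map (μ := smoothingPosterior (k := k) p₀ q g)
    (f := fun z => (z (Fin.last k).castSucc, z (Fin.last (k + 1)))) (by fun_prop)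
  show _ = Measure.map (fun z => (z (Fin.last k).castSucc, z (Fin.last (k + 1))))
    (smoothingPosterior p₀ q g)
  exact Measure.eq_of_eq_smul_of_eq_smul ha
    (map_smoothingPosterior_eq_smul hp₀ hq hg hp₀pos hqpos hgpos)
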